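/- There exists a rigid projective plane, i.e., a projective plane whose only automorphism is the identity: whenever (σ, τ) is a pair of bijections of its points and its lines such that a point p is incident with a line M if and only if σ(p) is incident with τ(M), then σ and τ are both the identity map. -/
import Mathlib


/-- A point-line incidence relation `I` is a projective plane if any two distinct
points lie on a unique common line, any two distinct lines meet in a unique point,
and there exist four points no three of which are incident with a common line. -/
structure IsProjectivePlane {P L : Type*} (I : P → L → Prop) : Prop where
  line_unique : ∀ p q : P, p ≠ q → ∃! M : L, I p M ∧ I q M
  point_unique : ∀ M N : L, M ≠ N → ∃! p : P, I p M ∧ I p N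
  nondeg : ∃ a b c d : P, a ≠ b ∧ a ≠ c ∧ a ≠ d ∧ b ≠ c ∧ b ≠ d ∧ c ≠ d ∧
    ∀ M : L, ¬(I a M ∧ I b M ∧ I c M) ∧ ¬(I a M ∧ I b M ∧ I d M) ∧
      ¬(I a M ∧ I c M ∧ I d M) ∧ ¬(I b M ∧ I c M ∧ I d M)


namespace RigidPlane

def lns : ℕ → List ℕ
  | 0 => [1, 3, 5, 10]
  | 1 => [2, 6, 7]
  | 2 => [4, 7, 8]
  | 3 => [0, 3, 9]
  | 4 => [0, 8, 10]
  | 5 => [0, 1, 7]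
  | 6 => [2, 8, 9]
  | 7 => [3, 4, 6]
  | 8 => [4, 9, 10]
  | 9 => [1, 2, 4]
  | 10 => [0, 5, 6]
  | 11 => [5, 7, 9]
  | 12 => [1, 6, 9]
  | _ => []

def I0 (p : Fin 11) (j : Fin 13) : Prop := p.val ∈ lns j.val

instance : DecidablePred fun x : Fin 11 × Fin 13 => I0 x.1 x.2 := fun _ => by
  unfold I0; infer_instance

instance (p : Fin 11) (j : Fin 13) : Decidable (I0 p j) := by unfold I0; infer_instance

-- sanity decide facts
theorem plinear : ∀ (a b : Fin 11) (c d : Fin 13), a ≠ b → c ≠ d →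
    ¬(I0 a c ∧ I0 a d ∧ I0 b c ∧ I0 b d) := by decide

theorem triple_lines : ∀ i : Fin 11, ∃ j1 j2 j3 : Fin 13,
    j1 ≠ j2 ∧ j1 ≠ j3 ∧ j2 ≠ j3 ∧ I0 i j1 ∧ I0 i j2 ∧ I0 i j3 := by decide

theorem triple_pts : ∀ j : Fin 13, ∃ p1 p2 p3 : Fin 11,
    p1 ≠ p2 ∧ p1 ≠ p3 ∧ p2 ≠ p3 ∧ I0 p1 j ∧ I0 p2 j ∧ I0 p3 j := by decide

theorem quadfact : ∀ j : Fin 13,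
    ¬(I0 0 j ∧ I0 1 j ∧ I0 2 j) ∧ ¬(I0 0 j ∧ I0 1 j ∧ I0 3 j) ∧
    ¬(I0 0 j ∧ I0 2 j ∧ I0 3 j) ∧ ¬(I0 1 j ∧ I0 2 j ∧ I0 3 j) := by decide


mutual
inductive FP : Type where
  | base : Fin 11 → FP
  | meet : FL → FL → FP
inductive FL : Type where
  | base : Fin 13 → FL
  | join : FP → FP → FL
end

mutual
def encP : FP → ℕ
  | .base i => Nat.pair 0 i.val
  | .meet A B => Nat.pair 1 (Nat.pair (encL A) (encL B))
def encL : FL → ℕ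
  | .base j => Nat.pair 0 j.val
  | .join x y => Nat.pair 1 (Nat.pair (encP x) (encP y))
end

mutual
theorem encP_inj : ∀ p q : FP, encP p = encP q → p = q
  | .base i, .base i', h => by
      simp only [encP, Nat.pair_eq_pair] at h
      exact congrArg FP.base (Fin.ext h.2)
  | .base i, .meet A B, h => by simp only [encP, Nat.pair_eq_pair] at h; exact absurd h.1 (by decide)
  | .meet A B, .base i, h => by simp only [encP, Nat.pair_eq_pair] at h; exact absurd h.1 (by decide)
  | .meet A B, .meet A' B', h => by
      simp only [encP, Nat.pair_eq_pair] at h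
      rw [encL_inj A A' h.2.1, encL_inj B B' h.2.2]
theorem encL_inj : ∀ M N : FL, encL M = encL N → M = N
  | .base j, .base j', h => by
      simp only [encL, Nat.pair_eq_pair] at h
      exact congrArg FL.base (Fin.ext h.2)
  | .base j, .join x y, h => by simp only [encL, Nat.pair_eq_pair] at h; exact absurd h.1 (by decide)
  | .join x y, .base j, h => by simp only [encL, Nat.pair_eq_pair] at h; exact absurd h.1 (by decide)
  | .join x y, .join x' y', h => by
      simp only [encL, Nat.pair_eq_pair] at h
      rw [encP_inj x x' h.2.1, encP_inj y y' h.2.2]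
end


inductive Inc : FP → FL → Prop where
  | base {i j} : I0 i j → Inc (.base i) (.base j)
  | meetL {A B} : Inc (.meet A B) A
  | meetR {A B} : Inc (.meet A B) B
  | joinL {x y} : Inc x (.join x y)
  | joinR {x y} : Inc y (.join x y)

def Vs : ℕ → (FP → Prop) × (FL → Prop)
  | 0 => (fun p => ∃ i, p = FP.base i, fun M => ∃ j, M = FL.base j)
  | n+1 =>
    (fun p => (Vs n).1 p ∨ ∃ A B, p = FP.meet A B ∧ (Vs n).2 A ∧ (Vs n).2 B ∧
        encL A < encL B ∧ ∀ q, (Vs n).1 q → ¬(Inc q A ∧ Inc q B),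
     fun M => (Vs n).2 M ∨ ∃ x y, M = FL.join x y ∧ (Vs n).1 x ∧ (Vs n).1 y ∧
        encP x < encP y ∧ ∀ N, (Vs n).2 N → ¬(Inc x N ∧ Inc y N))

def VP (n : ℕ) (p : FP) : Prop := (Vs n).1 p
def VL (n : ℕ) (M : FL) : Prop := (Vs n).2 M

theorem VP_zero {p} : VP 0 p ↔ ∃ i, p = FP.base i := Iff.rfl
theorem VL_zero {M} : VL 0 M ↔ ∃ j, M = FL.base j := Iff.rfl
theorem VP_succ {n p} : VP (n+1) p ↔ VP n p ∨ ∃ A B, p = FP.meet A B ∧ VL n A ∧ VL n B ∧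
    encL A < encL B ∧ ∀ q, VP n q → ¬(Inc q A ∧ Inc q B) := Iff.rfl
theorem VL_succ {n M} : VL (n+1) M ↔ VL n M ∨ ∃ x y, M = FL.join x y ∧ VP n x ∧ VP n y ∧
    encP x < encP y ∧ ∀ N, VL n N → ¬(Inc x N ∧ Inc y N) := Iff.rfl

theorem VP_mono : ∀ {m n}, m ≤ n → ∀ {p}, VP m p → VP n p := by
  intro m n h
  induction n with
  | zero => intro p hp; exact (Nat.le_zero.mp h ▸ hp)
  | succ n ih =>
    rcases Nat.lt_or_ge m (n+1) with h' | h'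
    · intro p hp; exact VP_succ.mpr (Or.inl (ih (Nat.lt_succ_iff.mp h') hp))
    · intro p hp; have : m = n + 1 := le_antisymm h h'; exact this ▸ hp

theorem VL_mono : ∀ {m n}, m ≤ n → ∀ {M}, VL m M → VL n M := by
  intro m n h
  induction n with
  | zero => intro M hM; exact (Nat.le_zero.mp h ▸ hM)
  | succ n ih =>
    rcases Nat.lt_or_ge m (n+1) with h' | h'
    · intro M hM; exact VL_succ.mpr (Or.inl (ih (Nat.lt_succ_iff.mp h') hM))
    · intro M hM; have : m = n + 1 := le_antisymm h h'; exact this ▸ hM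

def ValidP (p : FP) : Prop := ∃ n, VP n p
def ValidL (M : FL) : Prop := ∃ n, VL n M

noncomputable def stP (p : FP) : ℕ := sInf {n | VP n p}
noncomputable def stL (M : FL) : ℕ := sInf {n | VL n M}

theorem stP_spec {p} (h : ValidP p) : VP (stP p) p := Nat.sInf_mem h
theorem stL_spec {M} (h : ValidL M) : VL (stL M) M := Nat.sInf_mem h
theorem stP_le {p n} (h : VP n p) : stP p ≤ n := Nat.sInf_le h
theorem stL_le {M n} (h : VL n M) : stL M ≤ n := Nat.sInf_le h
theorem VP_of_st {p n} (h : ValidP p) (hn : stP p ≤ n) : VP n p := VP_mono hn (stP_spec h)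
theorem VL_of_st {M n} (h : ValidL M) (hn : stL M ≤ n) : VL n M := VL_mono hn (stL_spec h)

theorem validP_base (i) : ValidP (FP.base i) := ⟨0, ⟨i, rfl⟩⟩
theorem validL_base (j) : ValidL (FL.base j) := ⟨0, ⟨j, rfl⟩⟩
theorem stP_base (i) : stP (FP.base i) = 0 := Nat.le_zero.mp (stP_le ⟨i, rfl⟩)
theorem stL_base (j) : stL (FL.base j) = 0 := Nat.le_zero.mp (stL_le ⟨j, rfl⟩)

theorem meet_not_stage0 {A B} (h : ValidP (FP.meet A B)) : stP (FP.meet A B) ≠ 0 := by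
  intro h0
  obtain ⟨i, hi⟩ := VP_zero.mp (h0 ▸ stP_spec h)
  exact FP.noConfusion hi

theorem join_not_stage0 {x y} (h : ValidL (FL.join x y)) : stL (FL.join x y) ≠ 0 := by
  intro h0
  obtain ⟨j, hj⟩ := VL_zero.mp (h0 ▸ stL_spec h)
  exact FL.noConfusion hj

theorem meet_struct {A B} (h : ValidP (FP.meet A B)) :
    ValidL A ∧ ValidL B ∧ encL A < encL B ∧
    stL A < stP (FP.meet A B) ∧ stL B < stP (FP.meet A B) ∧
    ∀ q, ValidP q → stP q < stP (FP.meet A B) → ¬(Inc q A ∧ Inc q B) := by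
  obtain ⟨t, ht⟩ : ∃ t, stP (FP.meet A B) = t + 1 :=
    ⟨stP (FP.meet A B) - 1, (Nat.succ_pred_eq_of_ne_zero (meet_not_stage0 h)).symm⟩
  have hv := stP_spec h
  rw [ht] at hv
  rcases VP_succ.mp hv with h1 | ⟨A', B', heq, hA, hB, henc, hcl⟩
  · exact absurd (stP_le h1) (by omega)
  · obtain ⟨rfl, rfl⟩ : A' = A ∧ B' = B := by
      refine ⟨?_, ?_⟩ <;> injection heq.symm
    refine ⟨⟨t, hA⟩, ⟨t, hB⟩, henc, ?_, ?_, ?_⟩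
    · have := stL_le hA; omega
    · have := stL_le hB; omega
    · intro q hq hlt
      exact hcl q (VP_of_st hq (by omega))

theorem join_struct {x y} (h : ValidL (FL.join x y)) :
    ValidP x ∧ ValidP y ∧ encP x < encP y ∧
    stP x < stL (FL.join x y) ∧ stP y < stL (FL.join x y) ∧
    ∀ N, ValidL N → stL N < stL (FL.join x y) → ¬(Inc x N ∧ Inc y N) := by
  obtain ⟨t, ht⟩ : ∃ t, stL (FL.join x y) = t + 1 :=
    ⟨stL (FL.join x y) - 1, (Nat.succ_pred_eq_of_ne_zero (join_not_stage0 h)).symm⟩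
  have hv := stL_spec h
  rw [ht] at hv
  rcases VL_succ.mp hv with h1 | ⟨x', y', heq, hx, hy, henc, hcl⟩
  · exact absurd (stL_le h1) (by omega)
  · obtain ⟨rfl, rfl⟩ : x' = x ∧ y' = y := by
      refine ⟨?_, ?_⟩ <;> injection heq.symm
    refine ⟨⟨t, hx⟩, ⟨t, hy⟩, henc, ?_, ?_, ?_⟩
    · have := stP_le hx; omega
    · have := stP_le hy; omega
    · intro N hN hlt
      exact hcl N (VL_of_st hN (by omega))


/-- If `p` is valid and not at stage 0 it is a meet. -/
theorem eq_meet_of_stP_pos {p} (h : ValidP p) (h0 : stP p ≠ 0) :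
    ∃ A B, p = FP.meet A B := by
  cases p with
  | base i => exact absurd (stP_base i) h0
  | meet A B => exact ⟨A, B, rfl⟩

theorem eq_join_of_stL_pos {M} (h : ValidL M) (h0 : stL M ≠ 0) :
    ∃ x y, M = FL.join x y := by
  cases M with
  | base j => exact absurd (stL_base j) h0
  | join x y => exact ⟨x, y, rfl⟩

/-- stage-0 valid elements are base. -/
theorem eq_base_of_stP_zero {p} (h : ValidP p) (h0 : stP p = 0) :
    ∃ i, p = FP.base i := VP_zero.mp (h0 ▸ stP_spec h)

theorem eq_base_of_stL_zero {M} (h : ValidL M) (h0 : stL M = 0) :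
    ∃ j, M = FL.base j := VL_zero.mp (h0 ▸ stL_spec h)

/-- the main at-most-one lemma, case where a point has max stage -/
theorem aux1 {p q : FP} {M N : FL} (hp : ValidP p) (hq : ValidP q)
    (hM : ValidL M) (hN : ValidL N) (hpq : p ≠ q) (hMN : M ≠ N)
    (hpM : Inc p M) (hpN : Inc p N) (hqM : Inc q M) (hqN : Inc q N)
    (h1 : stP q ≤ stP p) (h2 : stL M ≤ stP p) (h3 : stL N ≤ stP p) : False := by
  by_cases h0 : stP p = 0
  · -- everything stage 0, base case
    obtain ⟨i, rfl⟩ := eq_base_of_stP_zero hp h0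
    obtain ⟨i', rfl⟩ := eq_base_of_stP_zero hq (by omega)
    obtain ⟨j, rfl⟩ := eq_base_of_stL_zero hM (by omega)
    obtain ⟨j', rfl⟩ := eq_base_of_stL_zero hN (by omega)
    have e1 : I0 i j := by cases hpM; assumption
    have e2 : I0 i j' := by cases hpN; assumption
    have e3 : I0 i' j := by cases hqM; assumption
    have e4 : I0 i' j' := by cases hqN; assumption
    exact plinear i i' j j' (fun h => hpq (congrArg FP.base h))
      (fun h => hMN (congrArg FL.base h)) ⟨e1, e2, e3, e4⟩
  · obtain ⟨A, B, rfl⟩ := eq_meet_of_stP_pos hp h0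
    obtain ⟨hvA, hvB, henc, hsA, hsB, hcl⟩ := meet_struct hp
    -- M and N are among the parents A, B
    have hM' : M = A ∨ M = B := by
      cases hpM with
      | meetL => exact Or.inl rfl
      | meetR => exact Or.inr rfl
      | joinL =>
        obtain ⟨_, _, _, hs, _, _⟩ := join_struct hM
        omega
      | joinR =>
        obtain ⟨_, _, _, _, hs, _⟩ := join_struct hM
        omega
    have hN' : N = A ∨ N = B := by
      cases hpN with
      | meetL => exact Or.inl rfl
      | meetR => exact Or.inr rfl
      | joinL =>
        obtain ⟨_, _, _, hs, _, _⟩ := join_struct hN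
        omega
      | joinR =>
        obtain ⟨_, _, _, _, hs, _⟩ := join_struct hN
        omega
    -- q is incident with both A and B
    have hqAB : Inc q A ∧ Inc q B := by
      rcases hM' with rfl | rfl <;> rcases hN' with rfl | rfl
      · exact absurd rfl hMN
      · exact ⟨hqM, hqN⟩
      · exact ⟨hqN, hqM⟩
      · exact absurd rfl hMN
    -- so q has stage ≥ stP p, hence equal
    have hqst : stP q = stP (FP.meet A B) := by
      by_contra hne
      exact hcl q hq (by omega) hqAB
    -- q is a meet with the same parents
    obtain ⟨A', B', rfl⟩ := eq_meet_of_stP_pos hq (by omega)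
    obtain ⟨hvA', hvB', henc', hsA', hsB', _⟩ := meet_struct hq
    have hA'B' : (A = A' ∨ A = B') ∧ (B = A' ∨ B = B') := by
      constructor
      · cases hqAB.1 with
        | meetL => exact Or.inl rfl
        | meetR => exact Or.inr rfl
        | joinL =>
          obtain ⟨_, _, _, hs, _, _⟩ := join_struct hvA
          omega
        | joinR =>
          obtain ⟨_, _, _, _, hs, _⟩ := join_struct hvA
          omega
      · cases hqAB.2 with
        | meetL => exact Or.inl rfl
        | meetR => exact Or.inr rfl
        | joinL =>
          obtain ⟨_, _, _, hs, _, _⟩ := join_struct hvB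
          omega
        | joinR =>
          obtain ⟨_, _, _, _, hs, _⟩ := join_struct hvB
          omega
    rcases hA'B' with ⟨rfl | rfl, h2'⟩
    · rcases h2' with rfl | rfl
      · omega
      · exact hpq rfl
    · rcases h2' with rfl | rfl
      · omega
      · omega

theorem aux2 {p q : FP} {M N : FL} (hp : ValidP p) (hq : ValidP q)
    (hM : ValidL M) (hN : ValidL N) (hpq : p ≠ q) (hMN : M ≠ N)
    (hpM : Inc p M) (hpN : Inc p N) (hqM : Inc q M) (hqN : Inc q N)
    (h1 : stL N ≤ stL M) (h2 : stP p ≤ stL M) (h3 : stP q ≤ stL M) : False := by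
  by_cases h0 : stL M = 0
  · obtain ⟨j, rfl⟩ := eq_base_of_stL_zero hM h0
    obtain ⟨j', rfl⟩ := eq_base_of_stL_zero hN (by omega)
    obtain ⟨i, rfl⟩ := eq_base_of_stP_zero hp (by omega)
    obtain ⟨i', rfl⟩ := eq_base_of_stP_zero hq (by omega)
    have e1 : I0 i j := by cases hpM; assumption
    have e2 : I0 i j' := by cases hpN; assumption
    have e3 : I0 i' j := by cases hqM; assumption
    have e4 : I0 i' j' := by cases hqN; assumption
    exact plinear i i' j j' (fun h => hpq (congrArg FP.base h))
      (fun h => hMN (congrArg FL.base h)) ⟨e1, e2, e3, e4⟩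
  · obtain ⟨x, y, rfl⟩ := eq_join_of_stL_pos hM h0
    obtain ⟨hvx, hvy, henc, hsx, hsy, hcl⟩ := join_struct hM
    have hp' : p = x ∨ p = y := by
      cases hpM with
      | joinL => exact Or.inl rfl
      | joinR => exact Or.inr rfl
      | meetL =>
        obtain ⟨_, _, _, hs, _, _⟩ := meet_struct hp
        omega
      | meetR =>
        obtain ⟨_, _, _, _, hs, _⟩ := meet_struct hp
        omega
    have hq' : q = x ∨ q = y := by
      cases hqM with
      | joinL => exact Or.inl rfl
      | joinR => exact Or.inr rfl
      | meetL =>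
        obtain ⟨_, _, _, hs, _, _⟩ := meet_struct hq
        omega
      | meetR =>
        obtain ⟨_, _, _, _, hs, _⟩ := meet_struct hq
        omega
    have hNxy : Inc x N ∧ Inc y N := by
      rcases hp' with rfl | rfl <;> rcases hq' with rfl | rfl
      · exact absurd rfl hpq
      · exact ⟨hpN, hqN⟩
      · exact ⟨hqN, hpN⟩
      · exact absurd rfl hpq
    have hNst : stL N = stL (FL.join x y) := by
      by_contra hne
      exact hcl N hN (by omega) hNxy
    obtain ⟨x', y', rfl⟩ := eq_join_of_stL_pos hN (by omega)
    obtain ⟨hvx', hvy', henc', hsx', hsy', _⟩ := join_struct hN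
    have hx'y' : (x = x' ∨ x = y') ∧ (y = x' ∨ y = y') := by
      constructor
      · cases hNxy.1 with
        | joinL => exact Or.inl rfl
        | joinR => exact Or.inr rfl
        | meetL =>
          obtain ⟨_, _, _, hs, _, _⟩ := meet_struct hvx
          omega
        | meetR =>
          obtain ⟨_, _, _, _, hs, _⟩ := meet_struct hvx
          omega
      · cases hNxy.2 with
        | joinL => exact Or.inl rfl
        | joinR => exact Or.inr rfl
        | meetL =>
          obtain ⟨_, _, _, hs, _, _⟩ := meet_struct hvy
          omega
        | meetR =>
          obtain ⟨_, _, _, _, hs, _⟩ := meet_struct hvy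
          omega
    rcases hx'y' with ⟨rfl | rfl, h2'⟩
    · rcases h2' with rfl | rfl
      · omega
      · exact hMN rfl
    · rcases h2' with rfl | rfl
      · omega
      · omega

/-- two distinct points lie on at most one common valid line, and dually. -/
theorem at_most {p q : FP} {M N : FL} (hp : ValidP p) (hq : ValidP q)
    (hM : ValidL M) (hN : ValidL N) (hpq : p ≠ q) (hMN : M ≠ N)
    (hpM : Inc p M) (hpN : Inc p N) (hqM : Inc q M) (hqN : Inc q N) : False := by
  rcases le_total (stP p) (stP q) with h | h <;>
    rcases le_total (stL M) (stL N) with h' | h' <;>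
    rcases le_total (max (stP p) (stP q)) (max (stL M) (stL N)) with h'' | h''
  · exact aux2 hq hp hN hM hpq.symm hMN.symm hqN hqM hpN hpM (by omega) (by omega) (by omega)
  · exact aux1 hq hp hN hM hpq.symm hMN.symm hqN hqM hpN hpM (by omega) (by omega) (by omega)
  · exact aux2 hq hp hM hN hpq.symm hMN hqM hqN hpM hpN (by omega) (by omega) (by omega)
  · exact aux1 hq hp hM hN hpq.symm hMN hqM hqN hpM hpN (by omega) (by omega) (by omega)
  · exact aux2 hp hq hN hM hpq hMN.symm hpN hpM hqN hqM (by omega) (by omega) (by omega)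
  · exact aux1 hp hq hN hM hpq hMN.symm hpN hpM hqN hqM (by omega) (by omega) (by omega)
  · exact aux2 hp hq hM hN hpq hMN hpM hpN hqM hqN (by omega) (by omega) (by omega)
  · exact aux1 hp hq hM hN hpq hMN hpM hpN hqM hqN (by omega) (by omega) (by omega)


theorem exists_common_line {p q : FP} (hp : ValidP p) (hq : ValidP q) (hpq : p ≠ q) :
    ∃ M, ValidL M ∧ Inc p M ∧ Inc q M := by
  by_cases hex : ∃ M, ValidL M ∧ Inc p M ∧ Inc q M
  · exact hex
  · push_neg at hex
    have hne : encP p ≠ encP q := fun h => hpq (encP_inj p q h)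
    -- wlog enc p < enc q
    rcases Nat.lt_or_ge (encP p) (encP q) with hlt | hge
    · obtain ⟨n1, h1⟩ := hp
      obtain ⟨n2, h2⟩ := hq
      set n := max n1 n2 with hn
      have hpn : VP n p := VP_mono (le_max_left _ _) h1
      have hqn : VP n q := VP_mono (le_max_right _ _) h2
      have : VL (n+1) (FL.join p q) := VL_succ.mpr (Or.inr ⟨p, q, rfl, hpn, hqn, hlt,
        fun N hN hI => hex N ⟨n, hN⟩ hI.1 hI.2⟩)
      exact absurd ⟨n+1, this⟩ (fun hv => hex _ hv Inc.joinL Inc.joinR)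
    · have hlt : encP q < encP p := by omega
      obtain ⟨n1, h1⟩ := hp
      obtain ⟨n2, h2⟩ := hq
      set n := max n1 n2 with hn
      have hpn : VP n p := VP_mono (le_max_left _ _) h1
      have hqn : VP n q := VP_mono (le_max_right _ _) h2
      have : VL (n+1) (FL.join q p) := VL_succ.mpr (Or.inr ⟨q, p, rfl, hqn, hpn, hlt,
        fun N hN hI => hex N ⟨n, hN⟩ hI.2 hI.1⟩)
      exact absurd ⟨n+1, this⟩ (fun hv => hex _ hv Inc.joinR Inc.joinL)

theorem exists_common_point {M N : FL} (hM : ValidL M) (hN : ValidL N) (hMN : M ≠ N) :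
    ∃ p, ValidP p ∧ Inc p M ∧ Inc p N := by
  by_cases hex : ∃ p, ValidP p ∧ Inc p M ∧ Inc p N
  · exact hex
  · push_neg at hex
    have hne : encL M ≠ encL N := fun h => hMN (encL_inj M N h)
    rcases Nat.lt_or_ge (encL M) (encL N) with hlt | hge
    · obtain ⟨n1, h1⟩ := hM
      obtain ⟨n2, h2⟩ := hN
      set n := max n1 n2 with hn
      have hMn : VL n M := VL_mono (le_max_left _ _) h1
      have hNn : VL n N := VL_mono (le_max_right _ _) h2
      have : VP (n+1) (FP.meet M N) := VP_succ.mpr (Or.inr ⟨M, N, rfl, hMn, hNn, hlt,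
        fun r hr hI => hex r ⟨n, hr⟩ hI.1 hI.2⟩)
      exact absurd ⟨n+1, this⟩ (fun hv => hex _ hv Inc.meetL Inc.meetR)
    · have hlt : encL N < encL M := by omega
      obtain ⟨n1, h1⟩ := hM
      obtain ⟨n2, h2⟩ := hN
      set n := max n1 n2 with hn
      have hMn : VL n M := VL_mono (le_max_left _ _) h1
      have hNn : VL n N := VL_mono (le_max_right _ _) h2
      have : VP (n+1) (FP.meet N M) := VP_succ.mpr (Or.inr ⟨N, M, rfl, hNn, hMn, hlt,
        fun r hr hI => hex r ⟨n, hr⟩ hI.2 hI.1⟩)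
      exact absurd ⟨n+1, this⟩ (fun hv => hex _ hv Inc.meetR Inc.meetL)

/-! ### the plane -/

def Ppt : Type := {p : FP // ValidP p}
def Lln : Type := {M : FL // ValidL M}

def IS (p : Ppt) (M : Lln) : Prop := Inc p.1 M.1

def bp (i : Fin 11) : Ppt := ⟨FP.base i, validP_base i⟩
def bl (j : Fin 13) : Lln := ⟨FL.base j, validL_base j⟩

theorem inc_base_iff {i j} : Inc (FP.base i) (FL.base j) ↔ I0 i j := by
  constructor
  · intro h; cases h; assumption
  · exact Inc.base


theorem no_three_base_on_line {a b c : Fin 11} (M : Lln)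
    (hab : a ≠ b) (hac : a ≠ c) (hbc : b ≠ c)
    (ha : IS (bp a) M) (hb : IS (bp b) M) (hc : IS (bp c) M) :
    ∃ j, M.1 = FL.base j ∧ I0 a j ∧ I0 b j ∧ I0 c j := by
  obtain ⟨Mv, hMv⟩ := M
  cases Mv with
  | base j =>
    exact ⟨j, rfl, inc_base_iff.mp ha, inc_base_iff.mp hb, inc_base_iff.mp hc⟩
  | join x y =>
    obtain ⟨_, _, henc, _, _, _⟩ := join_struct hMv
    have hxy : x ≠ y := fun h => absurd (congrArg encP h) (Nat.ne_of_lt henc)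
    have hmem : ∀ i : Fin 11, Inc (FP.base i) (FL.join x y) → FP.base i = x ∨ FP.base i = y := by
      intro i h
      cases h
      · exact Or.inl rfl
      · exact Or.inr rfl
    have hbinj : ∀ {u v : Fin 11}, FP.base u = FP.base v → u = v := by
      intro u v h; injection h
    rcases hmem a ha with h1 | h1 <;> rcases hmem b hb with h2 | h2 <;>
      rcases hmem c hc with h3 | h3 <;>
      first
        | exact absurd (hbinj (h1.trans h2.symm)) hab
        | exact absurd (hbinj (h1.trans h3.symm)) hac
        | exact absurd (hbinj (h2.trans h3.symm)) hbc

theorem bp_inj {i i'} (h : bp i = bp i') : i = i' := by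
  have := congrArg Subtype.val h
  injection this

theorem bl_inj {j j'} (h : bl j = bl j') : j = j' := by
  have := congrArg Subtype.val h
  injection this

/-! ### rigidity, step A : images of base elements are base -/

section Rigid

variable (σ : Equiv.Perm Ppt) (τ : Equiv.Perm Lln)
variable (hcompat : ∀ p M, IS p M ↔ IS (σ p) (τ M))


include hcompat in
theorem stepA : (∀ i, ∃ i', (σ (bp i)).1 = FP.base i') ∧
    (∀ j, ∃ j', (τ (bl j)).1 = FL.base j') := by
  classical
  set s1 := Finset.univ.sup (fun i : Fin 11 => stP (σ (bp i)).1) with hs1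
  set s2 := Finset.univ.sup (fun j : Fin 13 => stL (τ (bl j)).1) with hs2
  have key : s1 = 0 ∧ s2 = 0 := by
    by_contra hcon
    have hpos : 1 ≤ max s1 s2 := by omega
    rcases le_total s2 s1 with hle | hle
    · -- a point image has maximal stage s1 ≥ 1
      have hs1pos : 1 ≤ s1 := by omega
      obtain ⟨i0, _, hmax⟩ := Finset.exists_mem_eq_sup Finset.univ
        ⟨0, Finset.mem_univ 0⟩ (fun i : Fin 11 => stP (σ (bp i)).1)
      set p := σ (bp i0) with hp
      have hvp : ValidP p.1 := p.2
      have hstp : stP p.1 = s1 := hmax.symm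
      obtain ⟨A, B, hAB⟩ := eq_meet_of_stP_pos hvp (by omega)
      obtain ⟨j1, j2, j3, h12, h13, h23, e1, e2, e3⟩ := triple_lines i0
      have himg : ∀ j : Fin 13, I0 i0 j → (τ (bl j)).1 = A ∨ (τ (bl j)).1 = B := by
        intro j hj
        have hinc : IS p (τ (bl j)) := (hcompat (bp i0) (bl j)).mp (Inc.base hj)
        unfold IS at hinc
        rw [hAB] at hinc
        have hstM : stL (τ (bl j)).1 ≤ s1 := by
          have : stL (τ (bl j)).1 ≤ s2 :=
            Finset.le_sup (f := fun j : Fin 13 => stL (τ (bl j)).1) (Finset.mem_univ j)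
          omega
        have hvM : ValidL (τ (bl j)).1 := (τ (bl j)).2
        rw [hAB] at hstp
        generalize hMj : (τ (bl j)).1 = Mv at hinc hstM hvM ⊢
        cases hinc with
        | meetL => exact Or.inl rfl
        | meetR => exact Or.inr rfl
        | joinL =>
          obtain ⟨_, _, _, hs, _, _⟩ := join_struct hvM
          omega
        | joinR =>
          obtain ⟨_, _, _, _, hs, _⟩ := join_struct hvM
          omega
      have hdist : ∀ {a b : Fin 13}, a ≠ b → (τ (bl a)).1 ≠ (τ (bl b)).1 := by
        intro a b hab h
        exact hab (bl_inj (τ.injective (Subtype.ext h)))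
      rcases himg j1 e1 with g1 | g1 <;> rcases himg j2 e2 with g2 | g2 <;>
        rcases himg j3 e3 with g3 | g3 <;>
        first
          | exact hdist h12 (g1.trans g2.symm)
          | exact hdist h13 (g1.trans g3.symm)
          | exact hdist h23 (g2.trans g3.symm)
    · have hs2pos : 1 ≤ s2 := by omega
      obtain ⟨j0, _, hmax⟩ := Finset.exists_mem_eq_sup Finset.univ
        ⟨0, Finset.mem_univ 0⟩ (fun j : Fin 13 => stL (τ (bl j)).1)
      set M := τ (bl j0) with hM
      have hvM : ValidL M.1 := M.2
      have hstM : stL M.1 = s2 := hmax.symm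
      obtain ⟨x, y, hxy⟩ := eq_join_of_stL_pos hvM (by omega)
      obtain ⟨p1, p2, p3, h12, h13, h23, e1, e2, e3⟩ := triple_pts j0
      have himg : ∀ i : Fin 11, I0 i j0 → (σ (bp i)).1 = x ∨ (σ (bp i)).1 = y := by
        intro i hi
        have hinc : IS (σ (bp i)) M := (hcompat (bp i) (bl j0)).mp (Inc.base hi)
        unfold IS at hinc
        rw [hxy] at hinc
        have hstq : stP (σ (bp i)).1 ≤ s2 := by
          have : stP (σ (bp i)).1 ≤ s1 :=
            Finset.le_sup (f := fun i : Fin 11 => stP (σ (bp i)).1) (Finset.mem_univ i)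
          omega
        have hvq : ValidP (σ (bp i)).1 := (σ (bp i)).2
        rw [hxy] at hstM
        generalize hPi : (σ (bp i)).1 = pv at hinc hstq hvq ⊢
        cases hinc with
        | joinL => exact Or.inl rfl
        | joinR => exact Or.inr rfl
        | meetL =>
          obtain ⟨_, _, _, hs, _, _⟩ := meet_struct hvq
          omega
        | meetR =>
          obtain ⟨_, _, _, _, hs, _⟩ := meet_struct hvq
          omega
      have hdist : ∀ {a b : Fin 11}, a ≠ b → (σ (bp a)).1 ≠ (σ (bp b)).1 := by
        intro a b hab h
        exact hab (bp_inj (σ.injective (Subtype.ext h)))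
      rcases himg p1 e1 with g1 | g1 <;> rcases himg p2 e2 with g2 | g2 <;>
        rcases himg p3 e3 with g3 | g3 <;>
        first
          | exact hdist h12 (g1.trans g2.symm)
          | exact hdist h13 (g1.trans g3.symm)
          | exact hdist h23 (g2.trans g3.symm)
  constructor
  · intro i
    have h1 : stP (σ (bp i)).1 ≤ s1 :=
      Finset.le_sup (f := fun i : Fin 11 => stP (σ (bp i)).1) (Finset.mem_univ i)
    exact eq_base_of_stP_zero (σ (bp i)).2 (by omega)
  · intro j
    have h1 : stL (τ (bl j)).1 ≤ s2 :=
      Finset.le_sup (f := fun j : Fin 13 => stL (τ (bl j)).1) (Finset.mem_univ j)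
    exact eq_base_of_stL_zero (τ (bl j)).2 (by omega)

end Rigid

section CRigid

variable (σ0 : Fin 11 → Fin 11) (τ0 : Fin 13 → Fin 13)
variable (hσ : Function.Injective σ0) (hτ : Function.Injective τ0)
variable (hc : ∀ i j, I0 i j ↔ I0 (σ0 i) (τ0 j))

def deg (p : Fin 11) : ℕ := (Finset.univ.filter (fun j => I0 p j)).card

def coll (q p : Fin 11) : Prop := ∃ j, I0 q j ∧ I0 p j

instance (q p : Fin 11) : Decidable (coll q p) := by unfold coll; infer_instance

def cnt (c : Fin 11 → ℕ) (v : ℕ) (p : Fin 11) : ℕ :=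
  (Finset.univ.filter (fun q => q ≠ p ∧ coll q p ∧ c q = v)).card

include hτ hc in
theorem deg_pres (p : Fin 11) : deg (σ0 p) = deg p := by
  have hbij : Function.Bijective τ0 := (Finite.injective_iff_bijective).mp hτ
  have hri : ∀ j, τ0 (Function.invFun τ0 j) = j :=
    Function.rightInverse_invFun hbij.2
  have hli : ∀ j, Function.invFun τ0 (τ0 j) = j := Function.leftInverse_invFun hτ
  unfold deg
  apply Finset.card_bij' (fun j _ => Function.invFun τ0 j) (fun j _ => τ0 j)
  · intro j hj
    simp only [Finset.mem_filter, Finset.mem_univ, true_and] at hj ⊢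
    rw [hc p, hri j]
    exact hj
  · intro j hj
    simp only [Finset.mem_filter, Finset.mem_univ, true_and] at hj ⊢
    exact (hc p j).mp hj
  · intro j _; exact hri j
  · intro j _; exact hli j

include hτ hc in
theorem coll_pres (q p : Fin 11) : coll (σ0 q) (σ0 p) ↔ coll q p := by
  have hbij : Function.Bijective τ0 := (Finite.injective_iff_bijective).mp hτ
  have hri : ∀ j, τ0 (Function.invFun τ0 j) = j :=
    Function.rightInverse_invFun hbij.2
  constructor
  · rintro ⟨j', h1, h2⟩
    refine ⟨Function.invFun τ0 j', ?_, ?_⟩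
    · rw [hc q, hri j']
      exact h1
    · rw [hc p, hri j']
      exact h2
  · rintro ⟨j, h1, h2⟩
    exact ⟨τ0 j, (hc q j).mp h1, (hc p j).mp h2⟩

include hσ hτ hc in
theorem cnt_pres (c : Fin 11 → ℕ) (hcp : ∀ q, c (σ0 q) = c q) (v : ℕ) (p : Fin 11) :
    cnt c v (σ0 p) = cnt c v p := by
  have hbijσ : Function.Bijective σ0 := (Finite.injective_iff_bijective).mp hσ
  have hri : ∀ q, σ0 (Function.invFun σ0 q) = q :=
    Function.rightInverse_invFun hbijσ.2
  have hli : ∀ q, Function.invFun σ0 (σ0 q) = q := Function.leftInverse_invFun hσ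
  unfold cnt
  apply Finset.card_bij' (fun q _ => Function.invFun σ0 q) (fun q _ => σ0 q)
  · intro q hq
    simp only [Finset.mem_filter, Finset.mem_univ, true_and] at hq ⊢
    obtain ⟨h1, h2, h3⟩ := hq
    refine ⟨?_, ?_, ?_⟩
    · intro h; apply h1; rw [← hri q, h]
    · rw [← coll_pres σ0 τ0 hτ hc, hri q]; exact h2
    · rw [← hcp, hri q]; exact h3
  · intro q hq
    simp only [Finset.mem_filter, Finset.mem_univ, true_and] at hq ⊢
    obtain ⟨h1, h2, h3⟩ := hq
    exact ⟨fun h => h1 (hσ h), (coll_pres σ0 τ0 hτ hc q p).mpr h2, (hcp q).trans h3⟩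
  · intro q _; exact hri q
  · intro q _; exact hli q

def c1 (p : Fin 11) : ℕ :=
  deg p + 100 * cnt deg 3 p + 10000 * cnt deg 4 p + 1000000 * cnt deg 5 p

def c2 (p : Fin 11) : ℕ :=
  c1 p + 100000000 * (cnt c1 50505 p + 100 * cnt c1 1030203 p
    + 10000 * cnt c1 1030303 p + 1000000 * cnt c1 1030404 p
    + 100000000 * cnt c1 1040103 p + 10000000000 * cnt c1 1040203 p
    + 1000000000000 * cnt c1 1040304 p + 100000000000000 * cnt c1 1040404 p)

include hσ hτ hc in
theorem c1_pres (p : Fin 11) : c1 (σ0 p) = c1 p := by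
  unfold c1
  rw [deg_pres σ0 τ0 hτ hc,
    cnt_pres σ0 τ0 hσ hτ hc deg (deg_pres σ0 τ0 hτ hc) 3,
    cnt_pres σ0 τ0 hσ hτ hc deg (deg_pres σ0 τ0 hτ hc) 4,
    cnt_pres σ0 τ0 hσ hτ hc deg (deg_pres σ0 τ0 hτ hc) 5]

include hσ hτ hc in
theorem c2_pres (p : Fin 11) : c2 (σ0 p) = c2 p := by
  unfold c2
  rw [c1_pres σ0 τ0 hσ hτ hc,
    cnt_pres σ0 τ0 hσ hτ hc c1 (c1_pres σ0 τ0 hσ hτ hc) 50505,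
    cnt_pres σ0 τ0 hσ hτ hc c1 (c1_pres σ0 τ0 hσ hτ hc) 1030203,
    cnt_pres σ0 τ0 hσ hτ hc c1 (c1_pres σ0 τ0 hσ hτ hc) 1030303,
    cnt_pres σ0 τ0 hσ hτ hc c1 (c1_pres σ0 τ0 hσ hτ hc) 1030404,
    cnt_pres σ0 τ0 hσ hτ hc c1 (c1_pres σ0 τ0 hσ hτ hc) 1040103,
    cnt_pres σ0 τ0 hσ hτ hc c1 (c1_pres σ0 τ0 hσ hτ hc) 1040203,
    cnt_pres σ0 τ0 hσ hτ hc c1 (c1_pres σ0 τ0 hσ hτ hc) 1040304,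
    cnt_pres σ0 τ0 hσ hτ hc c1 (c1_pres σ0 τ0 hσ hτ hc) 1040404]

theorem c2_inj : ∀ p q : Fin 11, c2 p = c2 q → p = q := by decide

theorem lines_ext : ∀ j j' : Fin 13, (∀ q, I0 q j ↔ I0 q j') → j = j' := by decide

include hσ hτ hc in
theorem C_rigid : (∀ i, σ0 i = i) ∧ (∀ j, τ0 j = j) := by
  have hfix : ∀ p, σ0 p = p := fun p => c2_inj _ _ (c2_pres σ0 τ0 hσ hτ hc p)
  refine ⟨hfix, fun j => ?_⟩
  apply lines_ext
  intro q
  have := hc q j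
  rw [hfix q] at this
  exact this.symm

end CRigid

end RigidPlane

/-- There exists a rigid projective plane: a projective plane whose only
automorphism is the identity. -/
theorem exists_rigid_projective_plane :
    ∃ (P L : Type) (I : P → L → Prop),
      IsProjectivePlane I ∧
      ∀ (σ : Equiv.Perm P) (τ : Equiv.Perm L),
        (∀ (p : P) (M : L), I p M ↔ I (σ p) (τ M)) →
        (∀ p : P, σ p = p) ∧ (∀ M : L, τ M = M) := by
  classical
  refine ⟨RigidPlane.Ppt, RigidPlane.Lln, RigidPlane.IS, ⟨?_, ?_, ?_⟩, ?_⟩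
  · -- two points determine a unique line
    intro p q hne
    have hne' : p.1 ≠ q.1 := fun h => hne (Subtype.ext h)
    obtain ⟨M, hv, h1, h2⟩ := RigidPlane.exists_common_line p.2 q.2 hne'
    refine ⟨⟨M, hv⟩, ⟨h1, h2⟩, ?_⟩
    rintro ⟨N, hvN⟩ ⟨g1, g2⟩
    by_contra hcon
    exact RigidPlane.at_most p.2 q.2 hvN hv hne'
      (fun h => hcon (Subtype.ext h)) g1 h1 g2 h2
  · -- two lines meet in a unique point
    intro M N hMN
    have hMN' : M.1 ≠ N.1 := fun h => hMN (Subtype.ext h)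
    obtain ⟨p, hv, h1, h2⟩ := RigidPlane.exists_common_point M.2 N.2 hMN'
    refine ⟨⟨p, hv⟩, ⟨h1, h2⟩, ?_⟩
    rintro ⟨r, hvr⟩ ⟨g1, g2⟩
    by_contra hcon
    exact RigidPlane.at_most hvr hv M.2 N.2
      (fun h => hcon (Subtype.ext h)) hMN' g1 g2 h1 h2
  · -- nondegeneracy
    refine ⟨RigidPlane.bp 0, RigidPlane.bp 1, RigidPlane.bp 2, RigidPlane.bp 3,
      ?_, ?_, ?_, ?_, ?_, ?_, ?_⟩
    · exact fun h => absurd (RigidPlane.bp_inj h) (by decide)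
    · exact fun h => absurd (RigidPlane.bp_inj h) (by decide)
    · exact fun h => absurd (RigidPlane.bp_inj h) (by decide)
    · exact fun h => absurd (RigidPlane.bp_inj h) (by decide)
    · exact fun h => absurd (RigidPlane.bp_inj h) (by decide)
    · exact fun h => absurd (RigidPlane.bp_inj h) (by decide)
    intro M
    refine ⟨?_, ?_, ?_, ?_⟩
    · rintro ⟨h1, h2, h3⟩
      obtain ⟨j, _, e1, e2, e3⟩ := RigidPlane.no_three_base_on_line M
        (by decide) (by decide) (by decide) h1 h2 h3
      exact (RigidPlane.quadfact j).1 ⟨e1, e2, e3⟩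
    · rintro ⟨h1, h2, h3⟩
      obtain ⟨j, _, e1, e2, e3⟩ := RigidPlane.no_three_base_on_line M
        (by decide) (by decide) (by decide) h1 h2 h3
      exact (RigidPlane.quadfact j).2.1 ⟨e1, e2, e3⟩
    · rintro ⟨h1, h2, h3⟩
      obtain ⟨j, _, e1, e2, e3⟩ := RigidPlane.no_three_base_on_line M
        (by decide) (by decide) (by decide) h1 h2 h3
      exact (RigidPlane.quadfact j).2.2.1 ⟨e1, e2, e3⟩
    · rintro ⟨h1, h2, h3⟩
      obtain ⟨j, _, e1, e2, e3⟩ := RigidPlane.no_three_base_on_line M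
        (by decide) (by decide) (by decide) h1 h2 h3
      exact (RigidPlane.quadfact j).2.2.2 ⟨e1, e2, e3⟩
  · -- rigidity
    intro σ τ hcompat
    open RigidPlane in
    obtain ⟨hA, hB⟩ := RigidPlane.stepA σ τ hcompat
    choose σ0 hσ0 using hA
    choose τ0 hτ0 using hB
    have hσbp : ∀ i, σ (bp i) = bp (σ0 i) := fun i => Subtype.ext (hσ0 i)
    have hτbl : ∀ j, τ (bl j) = bl (τ0 j) := fun j => Subtype.ext (hτ0 j)
    have hσinj : Function.Injective σ0 := by
      intro i i' h
      have h2 : σ (bp i) = σ (bp i') := by rw [hσbp, hσbp, h]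
      exact bp_inj (σ.injective h2)
    have hτinj : Function.Injective τ0 := by
      intro j j' h
      have h2 : τ (bl j) = τ (bl j') := by rw [hτbl, hτbl, h]
      exact bl_inj (τ.injective h2)
    have hc0 : ∀ i j, I0 i j ↔ I0 (σ0 i) (τ0 j) := by
      intro i j
      constructor
      · intro h
        have h2 := (hcompat (bp i) (bl j)).mp (Inc.base h)
        rw [hσbp, hτbl] at h2
        exact inc_base_iff.mp h2
      · intro h
        have h2 : IS (σ (bp i)) (τ (bl j)) := by
          rw [hσbp, hτbl]; exact Inc.base h
        exact inc_base_iff.mp ((hcompat (bp i) (bl j)).mpr h2)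
    obtain ⟨hσid, hτid⟩ := C_rigid σ0 τ0 hσinj hτinj hc0
    have hfixbp : ∀ i, σ (bp i) = bp i := fun i => by rw [hσbp, hσid]
    have hfixbl : ∀ j, τ (bl j) = bl j := fun j => by rw [hτbl, hτid]
    have main : ∀ n, (∀ p : Ppt, stP p.1 ≤ n → σ p = p) ∧
        (∀ M : Lln, stL M.1 ≤ n → τ M = M) := by
      intro n
      induction n with
      | zero =>
        constructor
        · intro p hst
          obtain ⟨i, hi⟩ := eq_base_of_stP_zero p.2 (Nat.le_zero.mp hst)
          have h2 : p = bp i := Subtype.ext hi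
          rw [h2]; exact hfixbp i
        · intro M hst
          obtain ⟨j, hj⟩ := eq_base_of_stL_zero M.2 (Nat.le_zero.mp hst)
          have h2 : M = bl j := Subtype.ext hj
          rw [h2]; exact hfixbl j
      | succ n ih =>
        constructor
        · intro p hst
          rcases Nat.lt_or_ge (stP p.1) (n+1) with h | h
          · exact ih.1 p (by omega)
          · obtain ⟨A, B, hAB⟩ := eq_meet_of_stP_pos p.2 (by omega)
            have hvp' : ValidP (FP.meet A B) := hAB ▸ p.2
            obtain ⟨hvA, hvB, henc, hsA, hsB, -⟩ := meet_struct hvp'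
            rw [← hAB] at hsA hsB
            have hAfix := ih.2 ⟨A, hvA⟩ (by show stL A ≤ n; omega)
            have hBfix := ih.2 ⟨B, hvB⟩ (by show stL B ≤ n; omega)
            have h1 : IS p ⟨A, hvA⟩ := show Inc p.1 A by rw [hAB]; exact Inc.meetL
            have h2 : IS p ⟨B, hvB⟩ := show Inc p.1 B by rw [hAB]; exact Inc.meetR
            have g1 : IS (σ p) ⟨A, hvA⟩ := by
              have h3 := (hcompat p ⟨A, hvA⟩).mp h1; rwa [hAfix] at h3
            have g2 : IS (σ p) ⟨B, hvB⟩ := by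
              have h3 := (hcompat p ⟨B, hvB⟩).mp h2; rwa [hBfix] at h3
            by_contra hne
            exact at_most (σ p).2 p.2 hvA hvB (fun h => hne (Subtype.ext h))
              (fun h => absurd (congrArg encL h) (Nat.ne_of_lt henc)) g1 g2 h1 h2
        · intro M hst
          rcases Nat.lt_or_ge (stL M.1) (n+1) with h | h
          · exact ih.2 M (by omega)
          · obtain ⟨x, y, hxy⟩ := eq_join_of_stL_pos M.2 (by omega)
            have hvM' : ValidL (FL.join x y) := hxy ▸ M.2
            obtain ⟨hvx, hvy, henc, hsx, hsy, -⟩ := join_struct hvM'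
            rw [← hxy] at hsx hsy
            have hxfix := ih.1 ⟨x, hvx⟩ (by show stP x ≤ n; omega)
            have hyfix := ih.1 ⟨y, hvy⟩ (by show stP y ≤ n; omega)
            have h1 : IS ⟨x, hvx⟩ M := show Inc x M.1 by rw [hxy]; exact Inc.joinL
            have h2 : IS ⟨y, hvy⟩ M := show Inc y M.1 by rw [hxy]; exact Inc.joinR
            have g1 : IS ⟨x, hvx⟩ (τ M) := by
              have h3 := (hcompat ⟨x, hvx⟩ M).mp h1; rwa [hxfix] at h3
            have g2 : IS ⟨y, hvy⟩ (τ M) := by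
              have h3 := (hcompat ⟨y, hvy⟩ M).mp h2; rwa [hyfix] at h3
            by_contra hne
            exact at_most hvx hvy (τ M).2 M.2
              (fun h => absurd (congrArg encP h) (Nat.ne_of_lt henc))
              (fun h => hne (Subtype.ext h)) g1 h1 g2 h2
    exact ⟨fun p => (main (stP p.1)).1 p le_rfl, fun M => (main (stL M.1)).2 M le_rfl⟩
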